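/- (Asymptotic Huygens principle on homogeneous trees.) Let u solve the Cauchy problem for the shifted wave equation on T_q with finitely supported data f, g : T_q → ℂ, fix a base vertex 0 and write |x| = d(x,0). Let (N_n)_{n ∈ ℤ} be positive integers with N_n → +∞ and N_n/|n| → 0 as n → ±∞. Then the three expressions Σ_{x : |x| < |n| − N_n} |u(x,n)|², Σ_{(x,y) : |x| < |n| − N_n, |y| < |n| − N_n, d(x,y) = 2} |u(x,n) − u(y,n)|² (sum over ordered pairs), and Σ_{x : |x| < |n| − N_n} |u(x,n+1) − u(x,n−1)|² all tend to 0 as n → +∞ and as n → −∞. -/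

import Mathlib

/-! A solution with finitely supported data decays pointwise like `q^{-|n|/2}`. Forward in time
it equals `M_n u(·,1) - M_{n-1} u(·,0)`, where `M_n h(x) = q^{-n/2} ∑ h(y)` over the `y` with
`d(x,y) ≤ n` and `d(x,y) ≡ n (mod 2)`: in a tree these means obey the wave equation, because a
point of the parity ball of radius `m + 2` around `x` lies in the parity balls of radius `m + 1`
around all `q + 1` neighbours of `x` when it is within distance `m`, and around exactly one of
them otherwise. Time reversal gives the same bound for `n < 0`. The region `|x| < |n| - N_n` is
a ball with `O(q^{|n|-N_n})` vertices, so each of the three sums is `O(q^{-N_n}) → 0`. -/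

open scoped BigOperators

/-- A homogeneous tree of degree `q + 1`: a connected acyclic simple graph in which
every vertex has exactly `q + 1` neighbours. Spheres for the graph distance are finite. -/
structure HomTree (q : ℕ) where
  V : Type
  G : SimpleGraph V
  conn : G.Connected
  acyclic : G.IsAcyclic
  sphereFin : ∀ (x : V) (n : ℕ), {y : V | G.dist x y = n}.Finite
  nbrFin : ∀ x : V, {y : V | G.Adj x y}.Finite
  degree : ∀ x : V, (nbrFin x).toFinset.card = q + 1

namespace HomTree

variable {q : ℕ}

/-- The sphere `S(x,n)` as a finite set. -/
noncomputable def sphere (T : HomTree q) (x : T.V) (n : ℕ) : Finset T.V :=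
  (T.sphereFin x n).toFinset

/-- The volume `δ(n)` of spheres. -/
def delta (q n : ℕ) : ℕ := if n = 0 then 1 else (q + 1) * q ^ (n - 1)

/-- The combinatorial Laplacian on the tree. -/
noncomputable def lap (T : HomTree q) (f : T.V → ℂ) (x : T.V) : ℂ :=
  f x - (1 / ((q : ℂ) + 1)) * ∑ y ∈ T.sphere x 1, f y

/-- Spherical means. -/
noncomputable def sphMean (T : HomTree q) (f : T.V → ℂ) (x : T.V) (n : ℕ) : ℂ :=
  (1 / (delta q n : ℂ)) * ∑ y ∈ T.sphere x n, f y

/-- Real powers of `q`, as a complex number. -/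
noncomputable def qpow (q : ℕ) (x : ℝ) : ℂ := (((q : ℝ) ^ x : ℝ) : ℂ)

/-- `γ = 2 / (q^{1/2} + q^{-1/2})`. -/
noncomputable def gam (q : ℕ) : ℝ := 2 / ((q : ℝ) ^ ((1 : ℝ)/2) + (q : ℝ) ^ (-(1 : ℝ)/2))

/-- The combinatorial Laplacian on `ℤ`. -/
noncomputable def lapZ (φ : ℤ → ℂ) (m : ℤ) : ℂ := φ m - (φ (m + 1) + φ (m - 1)) / 2

lemma ball_finite (T : HomTree q) (x : T.V) (n : ℕ) :
    {y : T.V | T.G.dist x y ≤ n}.Finite := by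
  have h : {y : T.V | T.G.dist x y ≤ n} ⊆ ⋃ m ∈ Set.Iic n, {y : T.V | T.G.dist x y = m} := by
    intro y hy
    exact Set.mem_biUnion hy rfl
  exact (((Set.finite_Iic n)).biUnion fun m _ => T.sphereFin x m).subset h

/-- The ball `B(x,n)` as a finite set. -/
noncomputable def ball (T : HomTree q) (x : T.V) (n : ℕ) : Finset T.V :=
  (T.ball_finite x n).toFinset

/-- The operator `M_n` (with `M_n = 0` for `n < 0`). -/
noncomputable def Mop (T : HomTree q) (n : ℤ) (f : T.V → ℂ) (x : T.V) : ℂ :=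
  if 0 ≤ n then
    qpow q (-(n : ℝ) / 2) *
      ∑ y ∈ (T.ball x n.toNat).filter (fun y => (n.toNat - T.G.dist x y) % 2 = 0), f y
  else 0

/-- The operator `C_n = (M_{|n|} - M_{|n|-2})/2`, `C_0 = Id`. -/
noncomputable def Cop (T : HomTree q) (n : ℤ) (f : T.V → ℂ) (x : T.V) : ℂ :=
  if n = 0 then f x else (Mop T |n| f x - Mop T (|n| - 2) f x) / 2

/-- The operator `S_n = sign(n) · M_{|n|-1}`. -/
noncomputable def Sop (T : HomTree q) (n : ℤ) (g : T.V → ℂ) (x : T.V) : ℂ :=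
  (n.sign : ℂ) * Mop T (|n| - 1) g x

/-- `u` solves the shifted wave equation on the tree. -/
def IsWaveSol (T : HomTree q) (u : T.V → ℤ → ℂ) : Prop :=
  ∀ (x : T.V) (n : ℤ),
    u x (n + 1) + u x (n - 1) = qpow q (-(1 : ℝ)/2) * ∑ y ∈ T.sphere x 1, u y n

/-- `u` solves the Cauchy problem for the shifted wave equation with data `f`, `g`. -/
def IsCauchy (T : HomTree q) (f g : T.V → ℂ) (u : T.V → ℤ → ℂ) : Prop :=
  IsWaveSol T u ∧ (∀ x, u x 0 = f x) ∧ ∀ x, (u x 1 - u x (-1)) / 2 = g x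

/-- Kinetic energy. -/
noncomputable def kinetic (T : HomTree q) (u : T.V → ℤ → ℂ) (n : ℤ) : ℝ :=
  (1/2) * ∑' x : T.V, ‖(u x (n + 1) - u x (n - 1)) / 2‖ ^ 2

/-- Potential energy. -/
noncomputable def potential (T : HomTree q) (u : T.V → ℤ → ℂ) (n : ℤ) : ℝ :=
  (1 / (4 * (q : ℝ))) * ∑' p : T.V × T.V,
      (if T.G.dist p.1 p.2 = 2 then ‖(u p.1 n - u p.2 n) / 2‖ ^ 2 else 0)
    - (((q : ℝ) - 1) ^ 2 / (8 * (q : ℝ))) * ∑' x : T.V, ‖u x n‖ ^ 2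

/-- The two-step Laplacian. -/
noncomputable def lap2 (T : HomTree q) (f : T.V → ℂ) (x : T.V) : ℂ :=
  f x - (1 / ((q : ℂ) * ((q : ℂ) + 1))) * ∑ y ∈ T.sphere x 2, f y

end HomTree


open HomTree in
/-- The part of `∑ |u(x,n)|²` carried by the region `|x| < |n| - N_n`. -/
noncomputable def huyg1 {q : ℕ} (T : HomTree q) (o : T.V) (N : ℤ → ℕ)
    (u : T.V → ℤ → ℂ) (n : ℤ) : ℝ :=
  ∑' x : T.V,
    if (T.G.dist x o : ℤ) < |n| - N n then ‖u x n‖ ^ 2 else 0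

open HomTree in
/-- The part of `∑_{d(x,y)=2} |u(x,n) - u(y,n)|²` carried by `|x|, |y| < |n| - N_n`. -/
noncomputable def huyg2 {q : ℕ} (T : HomTree q) (o : T.V) (N : ℤ → ℕ)
    (u : T.V → ℤ → ℂ) (n : ℤ) : ℝ :=
  ∑' p : T.V × T.V,
    if (T.G.dist p.1 o : ℤ) < |n| - N n ∧ (T.G.dist p.2 o : ℤ) < |n| - N n ∧
        T.G.dist p.1 p.2 = 2
    then ‖u p.1 n - u p.2 n‖ ^ 2 else 0

open HomTree in
/-- The part of `∑ |u(x,n+1) - u(x,n-1)|²` carried by `|x| < |n| - N_n`. -/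
noncomputable def huyg3 {q : ℕ} (T : HomTree q) (o : T.V) (N : ℤ → ℕ)
    (u : T.V → ℤ → ℂ) (n : ℤ) : ℝ :=
  ∑' x : T.V,
    if (T.G.dist x o : ℤ) < |n| - N n
    then ‖u x (n + 1) - u x (n - 1)‖ ^ 2 else 0

open SimpleGraph Filter Topology

lemma tsum_ite_le_card_mul {α : Type*} {P : α → Prop} [DecidablePred P] {φ : α → ℝ}
    (s : Finset α) (hs : ∀ a, P a → a ∈ s) {c : ℝ} (hc : 0 ≤ c) (hφ : ∀ a, P a → φ a ≤ c) :
    ∑' a, (if P a then φ a else 0) ≤ s.card * c := by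
  rw [tsum_eq_sum fun a ha => if_neg (mt (hs a) ha)]
  calc ∑ a ∈ s, (if P a then φ a else 0) ≤ ∑ _a ∈ s, c :=
        Finset.sum_le_sum fun a _ => by split_ifs with h; exacts [hφ a h, hc]
    _ = s.card * c := by rw [Finset.sum_const, nsmul_eq_mul]

lemma tendsto_of_le_mul_pow {α : Type*} {l : Filter α} {F : α → ℝ} {N : α → ℕ} {C ρ : ℝ}
    (hρ₀ : 0 ≤ ρ) (hρ₁ : ρ < 1) (hF₀ : ∀ n, 0 ≤ F n) (hF : ∀ n, F n ≤ C * ρ ^ N n)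
    (hN : Tendsto N l atTop) : Tendsto F l (𝓝 0) := by
  have := ((tendsto_pow_atTop_nhds_zero_of_lt_one hρ₀ hρ₁).comp hN).const_mul C
  rw [mul_zero] at this
  exact squeeze_zero hF₀ hF this

lemma sq_norm_sub_le {E : Type*} [SeminormedAddCommGroup E] {a b : E} {c : ℝ}
    (ha : ‖a‖ ≤ c) (hb : ‖b‖ ≤ c) : ‖a - b‖ ^ 2 ≤ 4 * c ^ 2 := by
  have := norm_sub_le a b
  nlinarith [norm_nonneg (a - b)]

lemma sq_inv_sqrt_pow {q : ℕ} (k : ℕ) : ((√(q : ℝ))⁻¹ ^ k) ^ 2 = (q : ℝ)⁻¹ ^ k := by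
  rw [← pow_mul, mul_comm, pow_mul, inv_pow, Real.sq_sqrt (Nat.cast_nonneg q)]

lemma inv_sqrt_pow_le {q : ℕ} (hq : 1 ≤ q) {j k : ℕ} (hjk : k ≤ j + 1) :
    (√(q : ℝ))⁻¹ ^ j ≤ √q * (√q)⁻¹ ^ k := by
  have hsqrt : √(q : ℝ) * (√q)⁻¹ = 1 := mul_inv_cancel₀ (by positivity)
  calc (√(q : ℝ))⁻¹ ^ j = √q * (√q)⁻¹ ^ (j + 1) := by linear_combination (-(√q)⁻¹ ^ j) * hsqrt
    _ ≤ √q * (√q)⁻¹ ^ k := mul_le_mul_of_nonneg_left (pow_le_pow_of_le_one (by positivity)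
          (inv_le_one_of_one_le₀ (Real.one_le_sqrt.mpr (Nat.one_le_cast.mpr hq))) hjk)
        (Real.sqrt_nonneg _)

lemma pow_mul_inv_pow_le {q : ℕ} (hq : 1 ≤ q) (M N : ℕ) :
    (q : ℝ) ^ M * (q : ℝ)⁻¹ ^ (M + N + 1) ≤ (q : ℝ)⁻¹ ^ N := by
  have hq₀ : (q : ℝ) ≠ 0 := by positivity
  rw [add_assoc, pow_add, ← mul_assoc, ← mul_pow, mul_inv_cancel₀ hq₀, one_pow, one_mul]
  exact pow_le_pow_of_le_one (by positivity) (inv_le_one_of_one_le₀ (by exact_mod_cast hq))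
    (Nat.le_succ N)

namespace HomTree

variable {q : ℕ} (T : HomTree q)

lemma isTree : T.G.IsTree := ⟨T.conn, T.acyclic⟩

lemma mem_sphere {x y : T.V} {n : ℕ} : y ∈ T.sphere x n ↔ T.G.dist x y = n := by
  simp [sphere]

lemma mem_ball {x y : T.V} {n : ℕ} : y ∈ T.ball x n ↔ T.G.dist x y ≤ n := by
  simp [ball]

lemma mem_sphere_one {x y : T.V} : y ∈ T.sphere x 1 ↔ T.G.Adj x y := by
  rw [mem_sphere, dist_eq_one_iff_adj]

lemma card_sphere_one (x : T.V) : (T.sphere x 1).card = q + 1 := by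
  convert T.degree x using 2
  ext y
  simp [mem_sphere_one]

lemma exists_adj_dist_add_one {x y : T.V} (h : T.G.dist x y ≠ 0) :
    ∃ z, T.G.Adj y z ∧ T.G.dist x z + 1 = T.G.dist x y := by
  obtain ⟨p, hp⟩ := T.conn.exists_walk_length_eq_dist y x
  have hnil : ¬p.Nil := by
    rw [← Walk.length_eq_zero_iff, hp, dist_comm]
    exact h
  have hadj := p.adj_snd hnil
  have shorter : T.G.dist p.snd x ≤ p.tail.length := dist_le p.tail
  have tail := Walk.length_tail_add_one hnil
  have triangle := T.conn.dist_triangle (u := x) (v := p.snd) (w := y)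
  rw [dist_comm (u := p.snd) (v := y), dist_eq_one_iff_adj.mpr hadj] at triangle
  refine ⟨p.snd, hadj, ?_⟩
  have c₁ : T.G.dist x p.snd = T.G.dist p.snd x := dist_comm
  have c₂ : T.G.dist x y = T.G.dist y x := dist_comm
  omega

lemma eq_of_adj_of_dist_add_one {x y z₁ z₂ : T.V} (h₁ : T.G.Adj y z₁) (h₂ : T.G.Adj y z₂)
    (hd₁ : T.G.dist x z₁ + 1 = T.G.dist x y) (hd₂ : T.G.dist x z₂ + 1 = T.G.dist x y) :
    z₁ = z₂ := by
  classical
  obtain ⟨p, hp, -⟩ := T.conn.exists_path_of_dist x y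
  have mem : ∀ z, T.G.Adj y z → T.G.dist x z + 1 = T.G.dist x y → z ∈ p.support := by
    intro z hz hd
    obtain ⟨r, hr, hrl⟩ := T.conn.exists_path_of_dist x z
    refine T.acyclic.mem_support_of_ne_mem_support_of_adj_of_isPath hp hr hz fun hy => ?_
    have := (dist_le (r.takeUntil y hy)).trans (r.length_takeUntil_le_length hy)
    omega
  rw [T.acyclic.eq_penultimate_of_adj_end hp h₁ (mem z₁ h₁ hd₁),
    T.acyclic.eq_penultimate_of_adj_end hp h₂ (mem z₂ h₂ hd₂)]

lemma card_sphere_add_two_le (x : T.V) (n : ℕ) :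
    (T.sphere x (n + 2)).card ≤ q * (T.sphere x (n + 1)).card := by
  classical
  have cover : T.sphere x (n + 2) ⊆
      (T.sphere x (n + 1)).biUnion fun z => (T.sphere z 1).filter (T.G.dist x · = n + 2) := by
    intro y hy
    rw [mem_sphere] at hy
    obtain ⟨z, hyz, hz⟩ := T.exists_adj_dist_add_one (x := x) (y := y) (by omega)
    simp only [Finset.mem_biUnion, Finset.mem_filter, mem_sphere]
    exact ⟨z, by omega, dist_eq_one_iff_adj.mpr hyz.symm, hy⟩
  have fibre : ∀ z ∈ T.sphere x (n + 1),
      ((T.sphere z 1).filter (T.G.dist x · = n + 2)).card ≤ q := by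
    intro z hz
    rw [mem_sphere] at hz
    obtain ⟨w, hzw, hw⟩ := T.exists_adj_dist_add_one (x := x) (y := z) (by omega)
    have : (T.sphere z 1).filter (T.G.dist x · = n + 2) ⊆ (T.sphere z 1).erase w := by
      intro y hy
      rw [Finset.mem_filter] at hy
      exact Finset.mem_erase.mpr ⟨by rintro rfl; omega, hy.1⟩
    have hw1 : w ∈ T.sphere z 1 := T.mem_sphere_one.mpr hzw
    have := Finset.card_le_card this
    rw [Finset.card_erase_of_mem hw1, card_sphere_one] at this
    omega
  calc (T.sphere x (n + 2)).card
      ≤ ∑ z ∈ T.sphere x (n + 1), ((T.sphere z 1).filter (T.G.dist x · = n + 2)).card :=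
        (Finset.card_le_card cover).trans Finset.card_biUnion_le
    _ ≤ (T.sphere x (n + 1)).card * q := by simpa using Finset.sum_le_card_nsmul _ _ _ fibre
    _ = q * (T.sphere x (n + 1)).card := mul_comm _ _

lemma card_sphere_succ_le (x : T.V) (n : ℕ) : (T.sphere x (n + 1)).card ≤ (q + 1) * q ^ n := by
  induction n with
  | zero => simp [card_sphere_one]
  | succ n ih =>
    calc (T.sphere x (n + 2)).card ≤ q * (T.sphere x (n + 1)).card := T.card_sphere_add_two_le x n
      _ ≤ q * ((q + 1) * q ^ n) := Nat.mul_le_mul_left q ih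
      _ = (q + 1) * q ^ (n + 1) := by ring

lemma card_ball_le (hq : 2 ≤ q) (x : T.V) (n : ℕ) : (T.ball x n).card ≤ 3 * q ^ n := by
  classical
  induction n with
  | zero =>
    have : T.ball x 0 ⊆ {x} := fun y hy => by
      rw [mem_ball, Nat.le_zero, T.conn.dist_eq_zero_iff] at hy
      exact Finset.mem_singleton.mpr hy.symm
    simpa using (Finset.card_le_card this).trans (by simp)
  | succ n ih =>
    have : T.ball x (n + 1) ⊆ T.ball x n ∪ T.sphere x (n + 1) := fun y hy => by
      simp only [Finset.mem_union, mem_ball, mem_sphere] at hy ⊢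
      omega
    calc (T.ball x (n + 1)).card ≤ (T.ball x n).card + (T.sphere x (n + 1)).card :=
          (Finset.card_le_card this).trans (Finset.card_union_le _ _)
      _ ≤ 3 * q ^ n + (q + 1) * q ^ n := add_le_add ih (T.card_sphere_succ_le x n)
      _ ≤ 3 * q ^ (n + 1) := by rw [pow_succ]; nlinarith [pow_pos (by omega : 0 < q) n]

lemma support_sum_sphere_finite {M : Type*} [AddCommMonoid M] {f : T.V → M}
    (hf : (Function.support f).Finite) (n : ℕ) :
    (Function.support fun x => ∑ y ∈ T.sphere x n, f y).Finite := by
  refine (hf.biUnion fun y _ => T.sphereFin y n).subset fun x hx => ?_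
  obtain ⟨y, hy, hfy⟩ := Finset.exists_ne_zero_of_sum_ne_zero hx
  rw [mem_sphere] at hy
  exact Set.mem_biUnion hfy (by rwa [Set.mem_ofPred_eq, dist_comm])

noncomputable def parityBall (x : T.V) (n : ℕ) : Finset T.V :=
  (T.ball x n).filter fun y => (n - T.G.dist x y) % 2 = 0

lemma mem_parityBall {x y : T.V} {n : ℕ} :
    y ∈ T.parityBall x n ↔ T.G.dist x y ≤ n ∧ (n - T.G.dist x y) % 2 = 0 := by
  rw [parityBall, Finset.mem_filter, mem_ball]

lemma dist_eq_add_one_or_of_mem_sphere_one {x z : T.V} (hz : z ∈ T.sphere x 1) (y : T.V) :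
    T.G.dist z y = T.G.dist x y + 1 ∨ T.G.dist x y = T.G.dist z y + 1 := by
  have c₁ : T.G.dist z y = T.G.dist y z := dist_comm
  have c₂ : T.G.dist x y = T.G.dist y x := dist_comm
  rcases T.isTree.dist_eq_dist_add_one_of_adj y (T.mem_sphere_one.mp hz) with h | h <;> omega

open Classical in
lemma card_filter_mem_parityBall {x y : T.V} {m : ℕ} (hy : y ∈ T.parityBall x (m + 2)) :
    ((T.sphere x 1).filter (y ∈ T.parityBall · (m + 1))).card =
      if y ∈ T.parityBall x m then q + 1 else 1 := by
  rw [mem_parityBall] at hy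
  split_ifs with hm
  · rw [Finset.filter_true_of_mem, card_sphere_one]
    intro z hz
    rw [mem_parityBall] at hm ⊢
    rcases T.dist_eq_add_one_or_of_mem_sphere_one hz y with h | h <;> omega
  · rw [mem_parityBall] at hm
    have hd : T.G.dist y x = m + 2 := by rw [dist_comm]; omega
    obtain ⟨z₀, hxz₀, hz₀⟩ := T.exists_adj_dist_add_one (x := y) (y := x) (by omega)
    have hz₀y : T.G.dist z₀ y = m + 1 := by rw [dist_comm]; omega
    rw [Finset.card_eq_one]
    refine ⟨z₀, Finset.eq_singleton_iff_unique_mem.mpr ⟨?_, fun z hz => ?_⟩⟩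
    · rw [Finset.mem_filter, mem_sphere_one, mem_parityBall, hz₀y]
      exact ⟨hxz₀, le_rfl, by simp⟩
    · rw [Finset.mem_filter, mem_parityBall] at hz
      have hzy : T.G.dist y z + 1 = T.G.dist y x := by
        rw [dist_comm (u := y) (v := z)]
        rcases T.dist_eq_add_one_or_of_mem_sphere_one hz.1 y with h | h <;> omega
      exact T.eq_of_adj_of_dist_add_one (T.mem_sphere_one.mp hz.1) hxz₀ hzy hz₀

lemma sum_sphere_one_sum_parityBall (h : T.V → ℂ) (x : T.V) (m : ℕ) :
    ∑ z ∈ T.sphere x 1, ∑ y ∈ T.parityBall z (m + 1), h y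
      = ∑ y ∈ T.parityBall x (m + 2), h y + q * ∑ y ∈ T.parityBall x m, h y := by
  classical
  have hsub : ∀ z ∈ T.sphere x 1, T.parityBall z (m + 1) ⊆ T.parityBall x (m + 2) := by
    intro z hz y hy
    rw [mem_parityBall] at hy ⊢
    rcases T.dist_eq_add_one_or_of_mem_sphere_one hz y with h | h <;> omega
  have hsub' : T.parityBall x m ⊆ T.parityBall x (m + 2) := by
    intro y hy
    rw [mem_parityBall] at hy ⊢
    omega
  calc ∑ z ∈ T.sphere x 1, ∑ y ∈ T.parityBall z (m + 1), h y
      = ∑ z ∈ T.sphere x 1, ∑ y ∈ T.parityBall x (m + 2),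
          if y ∈ T.parityBall z (m + 1) then h y else 0 :=
        Finset.sum_congr rfl fun z hz => by
          rw [Finset.sum_ite_mem, Finset.inter_eq_right.mpr (hsub z hz)]
    _ = ∑ y ∈ T.parityBall x (m + 2),
          (((T.sphere x 1).filter (y ∈ T.parityBall · (m + 1))).card : ℂ) * h y := by
        rw [Finset.sum_comm]
        refine Finset.sum_congr rfl fun y _ => ?_
        rw [← Finset.sum_filter, Finset.sum_const, nsmul_eq_mul]
    _ = ∑ y ∈ T.parityBall x (m + 2), (h y + q * if y ∈ T.parityBall x m then h y else 0) :=
        Finset.sum_congr rfl fun y hy => by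
          rw [T.card_filter_mem_parityBall hy]
          split_ifs <;> push_cast <;> ring
    _ = _ := by
        rw [Finset.sum_add_distrib, ← Finset.mul_sum, Finset.sum_ite_mem,
          Finset.inter_eq_right.mpr hsub']

lemma qpow_neg_half (n : ℕ) : qpow q (-(n : ℝ) / 2) = (((√q)⁻¹ ^ n : ℝ) : ℂ) := by
  rw [qpow, neg_div, Real.rpow_neg (Nat.cast_nonneg q), Real.sqrt_eq_rpow, inv_pow,
    ← Real.rpow_natCast, ← Real.rpow_mul (Nat.cast_nonneg q)]
  ring_nf

lemma Mop_natCast (n : ℕ) (h : T.V → ℂ) (x : T.V) :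
    Mop T n h x = (((√q)⁻¹ ^ n : ℝ) : ℂ) * ∑ y ∈ T.parityBall x n, h y := by
  rw [Mop, if_pos n.cast_nonneg, Int.toNat_natCast, Int.cast_natCast, qpow_neg_half, parityBall]

lemma Mop_of_neg {n : ℤ} (hn : n < 0) (h : T.V → ℂ) (x : T.V) : Mop T n h x = 0 :=
  if_neg hn.not_ge

lemma Mop_zero (h : T.V → ℂ) (x : T.V) : Mop T 0 h x = h x := by
  have : T.parityBall x 0 = {x} := by
    ext y
    rw [mem_parityBall, Finset.mem_singleton, Nat.le_zero, T.conn.dist_eq_zero_iff, eq_comm]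
    simp
  simpa [this] using T.Mop_natCast 0 h x

lemma Mop_add_one_add_Mop_sub_one (hq : q ≠ 0) (m : ℕ) (h : T.V → ℂ) (x : T.V) :
    Mop T (m + 1) h x + Mop T (m - 1) h x
      = qpow q (-(1 : ℝ) / 2) * ∑ z ∈ T.sphere x 1, Mop T m h z := by
  have hsq : ((√q)⁻¹ : ℝ) ^ 2 * q = 1 := by
    rw [inv_pow, Real.sq_sqrt (Nat.cast_nonneg q), inv_mul_cancel₀ (by exact_mod_cast hq)]
  rw [show -(1 : ℝ) / 2 = -((1 : ℕ) : ℝ) / 2 by simp, qpow_neg_half]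
  cases m with
  | zero =>
    have : T.parityBall x 1 = T.sphere x 1 := by
      ext y
      rw [mem_parityBall, mem_sphere]
      omega
    simp only [Nat.cast_zero, zero_add, zero_sub, Mop_of_neg T (by norm_num : (-1 : ℤ) < 0),
      Mop_zero, add_zero]
    rw [← Nat.cast_one, Mop_natCast, this]
  | succ k =>
    rw [show ((k + 1 : ℕ) : ℤ) + 1 = ((k + 2 : ℕ) : ℤ) by push_cast; ring,
      show ((k + 1 : ℕ) : ℤ) - 1 = (k : ℤ) by push_cast; ring]
    simp only [Mop_natCast, ← Finset.mul_sum, sum_sphere_one_sum_parityBall]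
    have hsqC : ((√q : ℝ) : ℂ)⁻¹ ^ 2 * q = 1 := by exact_mod_cast hsq
    push_cast
    linear_combination -((√q : ℝ) : ℂ)⁻¹ ^ k * (∑ y ∈ T.parityBall x k, h y) * hsqC

lemma norm_Mop_natCast_le {h : T.V → ℂ} (hh : Summable fun y => ‖h y‖) (n : ℕ) (x : T.V) :
    ‖Mop T n h x‖ ≤ (√q)⁻¹ ^ n * ∑' y, ‖h y‖ := by
  rw [Mop_natCast, norm_mul, Complex.norm_real, Real.norm_of_nonneg (by positivity)]
  gcongr
  exact (norm_sum_le _ _).trans (hh.sum_le_tsum _ fun y _ => norm_nonneg _)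

section WaveEquation

variable {T}

lemma IsWaveSol.comp_neg {u : T.V → ℤ → ℂ} (hu : IsWaveSol T u) :
    IsWaveSol T fun x n => u x (-n) := by
  intro x n
  have := hu x (-n)
  rw [show -n + 1 = -(n - 1) by ring, show -n - 1 = -(n + 1) by ring] at this
  rw [add_comm, this]

lemma IsWaveSol.eq_Mop (hq : q ≠ 0) {u : T.V → ℤ → ℂ} (hu : IsWaveSol T u) (n : ℕ) (x : T.V) :
    u x (n + 1) = Mop T n (u · 1) x - Mop T (n - 1) (u · 0) x := by
  induction n using Nat.twoStepInduction generalizing x with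
  | zero => simp [Mop_zero, Mop_of_neg]
  | one =>
    have wave := hu x 1
    have recurrence := T.Mop_add_one_add_Mop_sub_one hq 0 (u · 1) x
    simp only [Nat.cast_zero, zero_add, zero_sub, Mop_of_neg T (by norm_num : (-1 : ℤ) < 0),
      add_zero, Mop_zero] at recurrence
    rw [show (1 : ℤ) + 1 = 2 by norm_num, sub_self] at wave
    rw [Nat.cast_one, one_add_one_eq_two, sub_self, Mop_zero, recurrence]
    linear_combination wave
  | more n ih₀ ih₁ =>
    have wave := hu x (n + 2)
    have rec₁ := T.Mop_add_one_add_Mop_sub_one hq (n + 1) (u · 1) x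
    have rec₀ := T.Mop_add_one_add_Mop_sub_one hq n (u · 0) x
    have sum_eq : ∑ y ∈ T.sphere x 1, u y (n + 2) = ∑ y ∈ T.sphere x 1,
        (Mop T (n + 1 : ℕ) (u · 1) y - Mop T n (u · 0) y) :=
      Finset.sum_congr rfl fun y _ => by simpa [add_assoc] using ih₁ y
    rw [Finset.sum_sub_distrib] at sum_eq
    have prev := ih₀ x
    push_cast at rec₁ rec₀ sum_eq prev ⊢
    ring_nf at wave rec₁ rec₀ sum_eq prev ⊢
    linear_combination wave + qpow q (-(1 : ℝ) / 2) * sum_eq - rec₁ + rec₀ - prev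

lemma IsWaveSol.norm_le (hq : q ≠ 0) {u : T.V → ℤ → ℂ} (hu : IsWaveSol T u)
    (h₀ : Summable fun x => ‖u x 0‖) (h₁ : Summable fun x => ‖u x 1‖) (n : ℕ) (x : T.V) :
    ‖u x n‖ ≤ (q * ∑' y, ‖u y 0‖ + √q * ∑' y, ‖u y 1‖) * (√q)⁻¹ ^ n := by
  set A := ∑' y, ‖u y 0‖
  set B := ∑' y, ‖u y 1‖
  have hA : 0 ≤ A := tsum_nonneg fun _ => norm_nonneg _
  have hB : 0 ≤ B := tsum_nonneg fun _ => norm_nonneg _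
  have hq₁ : (1 : ℝ) ≤ q := by exact_mod_cast Nat.one_le_iff_ne_zero.mpr hq
  have hsqrt : √(q : ℝ) * (√q)⁻¹ = 1 := mul_inv_cancel₀ (by positivity)
  have hqr : (q : ℝ) * (√q)⁻¹ ^ 2 = 1 := by
    rw [inv_pow, Real.sq_sqrt (Nat.cast_nonneg q), mul_inv_cancel₀ (by positivity)]
  cases n with
  | zero =>
    have : ‖u x 0‖ ≤ A := h₀.le_tsum x fun _ _ => norm_nonneg _
    simp only [Nat.cast_zero, pow_zero, mul_one]
    nlinarith [Real.sqrt_nonneg q]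
  | succ k =>
    have hb : ‖Mop T k (u · 1) x‖ ≤ √q * (√q)⁻¹ ^ (k + 1) * B := by
      refine (T.norm_Mop_natCast_le h₁ k x).trans_eq ?_
      linear_combination (-(√q)⁻¹ ^ k * B) * hsqrt
    have ha : ‖Mop T (k - 1) (u · 0) x‖ ≤ q * (√q)⁻¹ ^ (k + 1) * A := by
      cases k with
      | zero => simpa [Mop_of_neg] using by positivity
      | succ j =>
        rw [show ((j + 1 : ℕ) : ℤ) - 1 = j by push_cast; ring]
        refine (T.norm_Mop_natCast_le h₀ j x).trans_eq ?_
        linear_combination (-(√q)⁻¹ ^ j * A) * hqr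
    calc ‖u x (k + 1 : ℕ)‖ = ‖Mop T k (u · 1) x - Mop T (k - 1) (u · 0) x‖ := by
          rw [← hu.eq_Mop hq]; push_cast; rfl
      _ ≤ √q * (√q)⁻¹ ^ (k + 1) * B + q * (√q)⁻¹ ^ (k + 1) * A :=
          (norm_sub_le _ _).trans (add_le_add hb ha)
      _ = (q * A + √q * B) * (√q)⁻¹ ^ (k + 1) := by ring

lemma IsCauchy.support_subset {f g : T.V → ℂ} {u : T.V → ℤ → ℂ} (hu : IsCauchy T f g u)
    {n : ℤ} (hn : n = 1 ∨ n = -1) :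
    Function.support (u · n) ⊆
      (Function.support fun x => ∑ y ∈ T.sphere x 1, f y) ∪ Function.support g := by
  obtain ⟨hwave, h₀, h₁⟩ := hu
  intro x hx
  by_contra hc
  simp only [Set.mem_union, Function.mem_support, not_or, not_not] at hc
  obtain ⟨hsum, hgx⟩ := hc
  have wave := hwave x 0
  simp only [zero_add, zero_sub, h₀] at wave
  have data := h₁ x
  apply hx
  rcases hn with rfl | rfl
  · linear_combination wave / 2 + data + qpow q (-(1 : ℝ) / 2) / 2 * hsum + hgx
  · linear_combination wave / 2 - data + qpow q (-(1 : ℝ) / 2) / 2 * hsum - hgx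

lemma IsCauchy.exists_norm_le (hq : q ≠ 0) {f g : T.V → ℂ} {u : T.V → ℤ → ℂ}
    (hu : IsCauchy T f g u) (hf : (Function.support f).Finite) (hg : (Function.support g).Finite) :
    ∃ K, 0 ≤ K ∧ ∀ (n : ℤ) (x : T.V), ‖u x n‖ ≤ K * (√q)⁻¹ ^ n.natAbs := by
  have summable : ∀ n : ℤ, (Function.support (u · n)).Finite → Summable fun x => ‖u x n‖ :=
    fun n hn => summable_of_hasFiniteSupport (hn.subset (Function.support_comp_subset norm_zero _))
  have hs := (T.support_sum_sphere_finite hf 1).union hg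
  have h₀ : Summable fun x => ‖u x 0‖ := summable 0 (by simpa [hu.2.1] using hf)
  have h₁ := summable 1 (hs.subset (hu.support_subset (Or.inl rfl)))
  have hm₁ := summable (-1) (hs.subset (hu.support_subset (Or.inr rfl)))
  have forward := hu.1.norm_le hq h₀ h₁
  have backward := hu.1.comp_neg.norm_le hq (by simpa using h₀) (by simpa using hm₁)
  refine ⟨max (q * ∑' y, ‖u y 0‖ + √q * ∑' y, ‖u y 1‖) (q * ∑' y, ‖u y 0‖ + √q * ∑' y, ‖u y (-1)‖),
    le_max_of_le_left (by positivity), fun n x => ?_⟩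
  obtain ⟨k, rfl | rfl⟩ := Int.eq_nat_or_neg n
  · refine (forward k x).trans ?_
    simp only [Int.natAbs_natCast]
    gcongr
    exact le_max_left _ _
  · refine (backward k x).trans ?_
    simp only [Int.natAbs_neg, Int.natAbs_natCast, neg_zero]
    gcongr
    exact le_max_right _ _

end WaveEquation

lemma tsum_ite_dist_lt_le (hq : 2 ≤ q) (o : T.V) (n : ℤ) (N : ℕ) {C : ℝ} (hC : 0 ≤ C)
    {φ : T.V → ℝ} (hφ : ∀ x, φ x ≤ C * (q : ℝ)⁻¹ ^ n.natAbs) :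
    ∑' x, (if (T.G.dist x o : ℤ) < |n| - N then φ x else 0) ≤ 3 * C * (q : ℝ)⁻¹ ^ N := by
  set M := n.natAbs - N - 1
  have region : ∀ x, (T.G.dist x o : ℤ) < |n| - N → x ∈ T.ball o M ∧ n.natAbs = M + N + 1 := by
    intro x hx
    rw [Int.abs_eq_natAbs] at hx
    rw [mem_ball, dist_comm]
    omega
  calc _ ≤ (T.ball o M).card * (C * (q : ℝ)⁻¹ ^ (M + N + 1)) :=
        tsum_ite_le_card_mul _ (fun x hx => (region x hx).1) (by positivity)
          fun x hx => (region x hx).2 ▸ hφ x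
    _ ≤ (3 * (q : ℝ) ^ M) * (C * (q : ℝ)⁻¹ ^ (M + N + 1)) := by
        gcongr
        exact_mod_cast T.card_ball_le hq o M
    _ = 3 * C * ((q : ℝ) ^ M * (q : ℝ)⁻¹ ^ (M + N + 1)) := by ring
    _ ≤ 3 * C * (q : ℝ)⁻¹ ^ N := by gcongr; exact pow_mul_inv_pow_le (by omega) M N

lemma tsum_ite_dist_lt_dist_lt_le (hq : 2 ≤ q) (o : T.V) (n : ℤ) (N : ℕ) {C : ℝ} (hC : 0 ≤ C)
    {ψ : T.V × T.V → ℝ} (hψ : ∀ p, ψ p ≤ C * (q : ℝ)⁻¹ ^ n.natAbs) :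
    ∑' p : T.V × T.V, (if (T.G.dist p.1 o : ℤ) < |n| - N ∧ (T.G.dist p.2 o : ℤ) < |n| - N ∧
        T.G.dist p.1 p.2 = 2 then ψ p else 0)
      ≤ 3 * ((q + 1) * q) * C * (q : ℝ)⁻¹ ^ N := by
  classical
  set M := n.natAbs - N - 1
  set pairs := (T.ball o M).biUnion fun x => (T.sphere x 2).image (Prod.mk x)
  have region : ∀ p : T.V × T.V, (T.G.dist p.1 o : ℤ) < |n| - N ∧ (T.G.dist p.2 o : ℤ) < |n| - N ∧
      T.G.dist p.1 p.2 = 2 → p ∈ pairs ∧ n.natAbs = M + N + 1 := by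
    rintro ⟨x, y⟩ ⟨hx, -, hxy⟩
    dsimp only at hx hxy
    rw [Int.abs_eq_natAbs] at hx
    refine ⟨Finset.mem_biUnion.mpr ⟨x, ?_, Finset.mem_image_of_mem _ (T.mem_sphere.mpr hxy)⟩, ?_⟩
    · rw [mem_ball, dist_comm]
      omega
    · omega
  have card_pairs : (pairs.card : ℝ) ≤ 3 * q ^ M * ((q + 1) * q) := by
    have : pairs.card ≤ (T.ball o M).card * ((q + 1) * q) := by
      refine Finset.card_biUnion_le.trans (Finset.sum_le_card_nsmul _ _ _ fun x _ => ?_)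
      simpa using Finset.card_image_le.trans (T.card_sphere_succ_le x 1)
    have := this.trans (Nat.mul_le_mul_right _ (T.card_ball_le hq o M))
    exact_mod_cast this
  calc _ ≤ pairs.card * (C * (q : ℝ)⁻¹ ^ (M + N + 1)) :=
        tsum_ite_le_card_mul _ (fun p hp => (region p hp).1) (by positivity)
          fun p hp => (region p hp).2 ▸ hψ p
    _ ≤ (3 * q ^ M * ((q + 1) * q)) * (C * (q : ℝ)⁻¹ ^ (M + N + 1)) := by gcongr
    _ = 3 * ((q + 1) * q) * C * ((q : ℝ) ^ M * (q : ℝ)⁻¹ ^ (M + N + 1)) := by ring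
    _ ≤ 3 * ((q + 1) * q) * C * (q : ℝ)⁻¹ ^ N := by
        gcongr
        exact pow_mul_inv_pow_le (by omega) M N

end HomTree

section Huygens

variable {q : ℕ} {T : HomTree q} {u : T.V → ℤ → ℂ} {K : ℝ}

lemma tendsto_huyg1 (hq : 2 ≤ q) (hK : ∀ (n : ℤ) (x : T.V), ‖u x n‖ ≤ K * (√q)⁻¹ ^ n.natAbs)
    (o : T.V) {N : ℤ → ℕ} {l : Filter ℤ} (hN : Tendsto N l atTop) :
    Tendsto (huyg1 T o N u) l (𝓝 0) :=
  tendsto_of_le_mul_pow (by positivity) (inv_lt_one_of_one_lt₀ (by exact_mod_cast hq))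
    (fun n => tsum_nonneg fun x => by split_ifs <;> positivity)
    (fun n => T.tsum_ite_dist_lt_le hq o n (N n) (sq_nonneg K) fun x => by
      rw [← sq_inv_sqrt_pow, ← mul_pow]
      exact pow_le_pow_left₀ (norm_nonneg _) (hK n x) 2)
    hN

lemma tendsto_huyg2 (hq : 2 ≤ q) (hK : ∀ (n : ℤ) (x : T.V), ‖u x n‖ ≤ K * (√q)⁻¹ ^ n.natAbs)
    (o : T.V) {N : ℤ → ℕ} {l : Filter ℤ} (hN : Tendsto N l atTop) :
    Tendsto (huyg2 T o N u) l (𝓝 0) :=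
  tendsto_of_le_mul_pow (by positivity) (inv_lt_one_of_one_lt₀ (by exact_mod_cast hq))
    (fun n => tsum_nonneg fun p => by split_ifs <;> positivity)
    (fun n => T.tsum_ite_dist_lt_dist_lt_le hq o n (N n) (by positivity : 0 ≤ 4 * K ^ 2)
      fun p => (sq_norm_sub_le (hK n p.1) (hK n p.2)).trans_eq (by rw [← sq_inv_sqrt_pow]; ring))
    hN

lemma tendsto_huyg3 (hq : 2 ≤ q) (hK₀ : 0 ≤ K)
    (hK : ∀ (n : ℤ) (x : T.V), ‖u x n‖ ≤ K * (√q)⁻¹ ^ n.natAbs)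
    (o : T.V) {N : ℤ → ℕ} {l : Filter ℤ} (hN : Tendsto N l atTop) :
    Tendsto (huyg3 T o N u) l (𝓝 0) := by
  have adjacent : ∀ (n : ℤ) (x : T.V) (m : ℤ), (m = n + 1 ∨ m = n - 1) →
      ‖u x m‖ ≤ K * √q * (√q)⁻¹ ^ n.natAbs := fun n x m hm => by
    rw [mul_assoc]
    exact (hK m x).trans (mul_le_mul_of_nonneg_left (inv_sqrt_pow_le (by omega) (by omega)) hK₀)
  refine tendsto_of_le_mul_pow (by positivity) (inv_lt_one_of_one_lt₀ (by exact_mod_cast hq))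
    (fun n => tsum_nonneg fun x => by split_ifs <;> positivity)
    (fun n => T.tsum_ite_dist_lt_le hq o n (N n) (by positivity : 0 ≤ 4 * K ^ 2 * q)
      fun x => (sq_norm_sub_le (adjacent n x _ (.inl rfl)) (adjacent n x _ (.inr rfl))).trans_eq ?_)
    hN
  rw [mul_pow, mul_pow, Real.sq_sqrt (Nat.cast_nonneg q), sq_inv_sqrt_pow]
  ring

end Huygens

open HomTree in
theorem stmt19_general {q : ℕ} (hq : 2 ≤ q) (T : HomTree q) (f g : T.V → ℂ)
    (hf : (Function.support f).Finite) (hg : (Function.support g).Finite)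
    (u : T.V → ℤ → ℂ) (hu : HomTree.IsCauchy T f g u) (o : T.V)
    (N : ℤ → ℕ)
    (hNtop : Filter.Tendsto N Filter.atTop Filter.atTop)
    (hNbot : Filter.Tendsto N Filter.atBot Filter.atTop) :
    Filter.Tendsto (huyg1 T o N u) Filter.atTop (nhds 0) ∧
    Filter.Tendsto (huyg1 T o N u) Filter.atBot (nhds 0) ∧
    Filter.Tendsto (huyg2 T o N u) Filter.atTop (nhds 0) ∧
    Filter.Tendsto (huyg2 T o N u) Filter.atBot (nhds 0) ∧
    Filter.Tendsto (huyg3 T o N u) Filter.atTop (nhds 0) ∧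
    Filter.Tendsto (huyg3 T o N u) Filter.atBot (nhds 0) := by
  obtain ⟨K, hK₀, hK⟩ := hu.exists_norm_le (by omega) hf hg
  exact ⟨tendsto_huyg1 hq hK o hNtop, tendsto_huyg1 hq hK o hNbot,
    tendsto_huyg2 hq hK o hNtop, tendsto_huyg2 hq hK o hNbot,
    tendsto_huyg3 hq hK₀ hK o hNtop, tendsto_huyg3 hq hK₀ hK o hNbot⟩

open HomTree in
/-- asymptotic Huygens principle on homogeneous trees. -/
theorem stmt19 {q : ℕ} (hq : 2 ≤ q) (T : HomTree q) (f g : T.V → ℂ)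
    (hf : (Function.support f).Finite) (hg : (Function.support g).Finite)
    (u : T.V → ℤ → ℂ) (hu : HomTree.IsCauchy T f g u) (o : T.V)
    (N : ℤ → ℕ) (hNpos : ∀ n : ℤ, 0 < N n)
    (hNtop : Filter.Tendsto N Filter.atTop Filter.atTop)
    (hNbot : Filter.Tendsto N Filter.atBot Filter.atTop)
    (hNotop : Filter.Tendsto (fun n : ℤ => (N n : ℝ) / |(n : ℝ)|) Filter.atTop (nhds 0))
    (hNobot : Filter.Tendsto (fun n : ℤ => (N n : ℝ) / |(n : ℝ)|) Filter.atBot (nhds 0)) :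
    Filter.Tendsto (huyg1 T o N u) Filter.atTop (nhds 0) ∧
    Filter.Tendsto (huyg1 T o N u) Filter.atBot (nhds 0) ∧
    Filter.Tendsto (huyg2 T o N u) Filter.atTop (nhds 0) ∧
    Filter.Tendsto (huyg2 T o N u) Filter.atBot (nhds 0) ∧
    Filter.Tendsto (huyg3 T o N u) Filter.atTop (nhds 0) ∧
    Filter.Tendsto (huyg3 T o N u) Filter.atBot (nhds 0) :=
  stmt19_general hq T f g hf hg u hu o N hNtop hNbot
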